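/- Given the shift data and operational data of a fully polarized LG-algebra, the induced cotensor-family operations on P ⊕ N satisfy the Grishin residuation laws with respect to the relation ≤π: for all A, B, C ∈ P ⊕ N, C ⊘' B ≤π A if and only if C ≤π A ⊕' B if and only if A ⦸' C ≤π B. -/

import Mathlib

/-- A weakening relation from an ordered set `(α, leA)` to an ordered set `(β, leB)`. -/
def IsWeakeningBetween {α β : Type*} (leA : α → α → Prop) (leB : β → β → Prop)
    (R : α → β → Prop) : Prop :=
  ∀ ⦃a' a b b'⦄, leA a' a → R a b → leB b b' → R a' b'

/-- The shift data of a fully polarized LG-algebra: four posets `P`, `Ṗ` (`Pd`),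
`N`, `Ṅ` (`Nd`), adjoint pairs of monotone shift maps `↑ ⊣ ⫞` and `↿ ⊣ ↓`, and
three weakening relations `⪌ʳ` (`gtr : P → Ṗ`), `⪯` (`prec : P → N`) and
`⪅ᵇ` (`lesb : Ṅ → N`) with `↑p ⪅ᵇ n ↔ p ⪯ n ↔ p ⪌ʳ ↓n`. -/
structure ShiftData (P Pd N Nd : Type*) [PartialOrder P] [PartialOrder Pd]
    [PartialOrder N] [PartialOrder Nd] where
  /-- `↑ : P → Ṅ` -/
  up : P → Nd
  /-- `⫞ : Ṅ → P` -/
  corner : Nd → P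
  /-- `↿ : Ṗ → N` -/
  upl : Pd → N
  /-- `↓ : N → Ṗ` -/
  down : N → Pd
  up_mono : Monotone up
  corner_mono : Monotone corner
  upl_mono : Monotone upl
  down_mono : Monotone down
  /-- the adjunction `↑ ⊣ ⫞` -/
  up_adj : ∀ (p : P) (nd : Nd), up p ≤ nd ↔ p ≤ corner nd
  /-- the adjunction `↿ ⊣ ↓` -/
  upl_adj : ∀ (pd : Pd) (n : N), upl pd ≤ n ↔ pd ≤ down n
  /-- `⪌ʳ : P → Ṗ` -/
  gtr : P → Pd → Prop
  /-- `⪯ : P → N` -/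
  prec : P → N → Prop
  /-- `⪅ᵇ : Ṅ → N` -/
  lesb : Nd → N → Prop
  gtr_wk : IsWeakeningBetween (· ≤ ·) (· ≤ ·) gtr
  prec_wk : IsWeakeningBetween (· ≤ ·) (· ≤ ·) prec
  lesb_wk : IsWeakeningBetween (· ≤ ·) (· ≤ ·) lesb
  /-- `↑p ⪅ᵇ n ↔ p ⪯ n` -/
  lesb_up_iff_prec : ∀ (p : P) (n : N), lesb (up p) n ↔ prec p n
  /-- `p ⪯ n ↔ p ⪌ʳ ↓n` -/
  prec_iff_gtr_down : ∀ (p : P) (n : N), prec p n ↔ gtr p (down n)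

variable {P Pd N Nd : Type*} [PartialOrder P] [PartialOrder Pd]
  [PartialOrder N] [PartialOrder Nd]

/-- The represented relation `⪌ : P → Ṅ`, `p ⪌ ṅ ↔ ↑p ⩿_Ṅ ṅ`. -/
def ShiftData.gles (S : ShiftData P Pd N Nd) (p : P) (nd : Nd) : Prop := S.up p ≤ nd

/-- The represented relation `⪷ : Ṗ → N`, `ṗ ⪷ n ↔ ṗ ⩿_Ṗ ↓n`. -/
def ShiftData.pres (S : ShiftData P Pd N Nd) (pd : Pd) (n : N) : Prop := pd ≤ S.down n

/-- The relation `⸧ : P̊ → N̊` with `P̊ = P ⊕ Ṗ` and `N̊ = N ⊕ Ṅ`, defined by cases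
from `⪯`, `⪌` and `⪷` (and never holding between two shifted elements). -/
def ShiftData.tack (S : ShiftData P Pd N Nd) : P ⊕ Pd → N ⊕ Nd → Prop
  | Sum.inl p, Sum.inl n => S.prec p n
  | Sum.inl p, Sum.inr nd => S.gles p nd
  | Sum.inr pd, Sum.inl n => S.pres pd n
  | Sum.inr _, Sum.inr _ => False

/-- The relation `≤π` on `P ⊕ N`: `p ≤π q ↔ p ⪌ ↑q`, `p ≤π n ↔ p ⪯ n`,
`m ≤π n ↔ ↓m ⪷ n`, and no element of `N` is below an element of `P`. -/
def ShiftData.lepi (S : ShiftData P Pd N Nd) : P ⊕ N → P ⊕ N → Prop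
  | Sum.inl p, Sum.inl q => S.gles p (S.up q)
  | Sum.inl p, Sum.inr n => S.prec p n
  | Sum.inr m, Sum.inr n => S.pres (S.down m) n
  | Sum.inr _, Sum.inl _ => False

/-- A fully polarized LG-algebra: shift data together with the six heterogeneous
operations `⊗, \, /, ⊕, ⊘, ⦸` satisfying the residuation laws w.r.t. `⸧`. -/
structure FPLG (P Pd N Nd : Type*) [PartialOrder P] [PartialOrder Pd]
    [PartialOrder N] [PartialOrder Nd] extends ShiftData P Pd N Nd where
  /-- `⊗ : P̊ × P̊ → P` -/
  tens : P ⊕ Pd → P ⊕ Pd → P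
  /-- `\ : P̊ × N̊ → N` -/
  lres : P ⊕ Pd → N ⊕ Nd → N
  /-- `/ : N̊ × P̊ → N` -/
  rres : N ⊕ Nd → P ⊕ Pd → N
  /-- `⊕ : N̊ × N̊ → N` -/
  coten : N ⊕ Nd → N ⊕ Nd → N
  /-- `⊘ : P̊ × N̊ → P` -/
  lsub : P ⊕ Pd → N ⊕ Nd → P
  /-- `⦸ : N̊ × P̊ → P` -/
  rsub : N ⊕ Nd → P ⊕ Pd → P
  /-- `y ⸧ x \ z ↔ x ⊗ y ⸧ z` -/
  resid_left : ∀ (x y : P ⊕ Pd) (z : N ⊕ Nd),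
    toShiftData.tack y (Sum.inl (lres x z)) ↔ toShiftData.tack (Sum.inl (tens x y)) z
  /-- `x ⊗ y ⸧ z ↔ x ⸧ z / y` -/
  resid_right : ∀ (x y : P ⊕ Pd) (z : N ⊕ Nd),
    toShiftData.tack (Sum.inl (tens x y)) z ↔ toShiftData.tack x (Sum.inl (rres z y))
  /-- `x ⊘ w ⸧ z ↔ x ⸧ z ⊕ w` -/
  coresid_left : ∀ (x : P ⊕ Pd) (z w : N ⊕ Nd),
    toShiftData.tack (Sum.inl (lsub x w)) z ↔ toShiftData.tack x (Sum.inl (coten z w))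
  /-- `x ⸧ z ⊕ w ↔ z ⦸ x ⸧ w` -/
  coresid_right : ∀ (x : P ⊕ Pd) (z w : N ⊕ Nd),
    toShiftData.tack x (Sum.inl (coten z w)) ↔ toShiftData.tack (Sum.inl (rsub z x)) w

/-- `A⁺ ∈ P̊`: the positive representative of `A ∈ P ⊕ N`. -/
def FPLG.pos (F : FPLG P Pd N Nd) : P ⊕ N → P ⊕ Pd
  | Sum.inl p => Sum.inl p
  | Sum.inr n => Sum.inr (F.down n)

/-- `A⁻ ∈ N̊`: the negative representative of `A ∈ P ⊕ N`. -/
def FPLG.neg (F : FPLG P Pd N Nd) : P ⊕ N → N ⊕ Nd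
  | Sum.inl p => Sum.inr (F.up p)
  | Sum.inr n => Sum.inl n

/-- The induced operation `A ⊗' B = A⁺ ⊗ B⁺` on `P ⊕ N`. -/
def FPLG.tens' (F : FPLG P Pd N Nd) (A B : P ⊕ N) : P ⊕ N :=
  Sum.inl (F.tens (F.pos A) (F.pos B))

/-- The induced operation `A \' B = A⁺ \ B⁻` on `P ⊕ N`. -/
def FPLG.lres' (F : FPLG P Pd N Nd) (A B : P ⊕ N) : P ⊕ N :=
  Sum.inr (F.lres (F.pos A) (F.neg B))

/-- The induced operation `A /' B = A⁻ / B⁺` on `P ⊕ N`. -/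
def FPLG.rres' (F : FPLG P Pd N Nd) (A B : P ⊕ N) : P ⊕ N :=
  Sum.inr (F.rres (F.neg A) (F.pos B))

/-- The induced operation `A ⊕' B = A⁻ ⊕ B⁻` on `P ⊕ N`. -/
def FPLG.coten' (F : FPLG P Pd N Nd) (A B : P ⊕ N) : P ⊕ N :=
  Sum.inr (F.coten (F.neg A) (F.neg B))

/-- The induced operation `A ⊘' B = A⁺ ⊘ B⁻` on `P ⊕ N`. -/
def FPLG.lsub' (F : FPLG P Pd N Nd) (A B : P ⊕ N) : P ⊕ N :=
  Sum.inl (F.lsub (F.pos A) (F.neg B))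

/-- The induced operation `A ⦸' B = A⁻ ⦸ B⁺` on `P ⊕ N`. -/
def FPLG.rsub' (F : FPLG P Pd N Nd) (A B : P ⊕ N) : P ⊕ N :=
  Sum.inl (F.rsub (F.neg A) (F.pos B))

lemma FPLG.lepi_iff_tack (F : FPLG P Pd N Nd) (X Y : P ⊕ N) :
    F.toShiftData.lepi X Y ↔ F.toShiftData.tack (F.pos X) (F.neg Y) := by
  cases X <;> cases Y <;> rfl

/-- The induced cotensor-family operations on `P ⊕ N` satisfy the Grishin residuation
laws with respect to `≤π`: `C ⊘' B ≤π A ↔ C ≤π A ⊕' B ↔ A ⦸' C ≤π B`. -/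
theorem stmt8 (F : FPLG P Pd N Nd) (A B C : P ⊕ N) :
    (F.toShiftData.lepi (F.lsub' C B) A ↔ F.toShiftData.lepi C (F.coten' A B)) ∧
    (F.toShiftData.lepi C (F.coten' A B) ↔ F.toShiftData.lepi (F.rsub' A C) B) := by
  simp only [F.lepi_iff_tack]
  exact ⟨F.coresid_left _ _ _, F.coresid_right _ _ _⟩
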